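/- Let D_1, D_2 be casebases and N_C a characterisation. If {α ∈ D_1 | α ⪯ N_C} = {α ∈ D_2 | α ⪯ N_C}, then the regular AA-CBR_⪰ prediction for N_C from D_1 equals the prediction from D_2. (Irrelevant cases do not affect the prediction.) -/
import Mathlib


namespace AACBR

/-- In an AF with arguments `args` and attack `att`, a set `E` defends argument `a`
iff every attacker of `a` (within `args`) is attacked by some element of `E`. -/
def defends {A : Type} (args : Set A) (att : A → A → Prop) (E : Set A) (a : A) : Prop :=
  ∀ b ∈ args, att b a → ∃ c ∈ E, att c b

/-- `G_0` is the set of unattacked arguments; `G_{i+1}` is the set of arguments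
defended by `G_i`. -/
def groundedSeq {A : Type} (args : Set A) (att : A → A → Prop) : ℕ → Set A
  | 0 => {a ∈ args | ∀ b ∈ args, ¬ att b a}
  | n + 1 => {a ∈ args | defends args att (groundedSeq args att n) a}

/-- The grounded extension `⋃ i, G_i`. -/
def grounded {A : Type} (args : Set A) (att : A → A → Prop) : Set A :=
  ⋃ i, groundedSeq args att i

variable {X : Type}

/-- Cases are pairs of a characterisation (in the partially ordered set `X`, where
`α ≤ β` reads "`α` is less specific than `β`") and one of the two outcomes
(modelled as `Bool`). Attack between labelled cases of the casebase `cb`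
(which includes the default argument): `a` attacks `b` iff their outcomes differ,
`a` is at least as specific as `b`, and no case of `cb` with the same outcome as
`a` is strictly in between. -/
def cbAtt [PartialOrder X] (cb : Set (X × Bool)) (a b : X × Bool) : Prop :=
  a ∈ cb ∧ b ∈ cb ∧ a.2 ≠ b.2 ∧ b.1 ≤ a.1 ∧
    ¬ ∃ g ∈ cb, g.2 = a.2 ∧ b.1 < g.1 ∧ g.1 < a.1

/-- The arguments of the AF mined from casebase `D`, default argument `(dC, dO)`
and a new case: `none` is the new-case argument, `some c` the labelled cases. -/
def minedArgs (D : Set (X × Bool)) (dC : X) (dO : Bool) : Set (Option (X × Bool)) :=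
  insert none (Option.some '' insert (dC, dO) D)

/-- The attack relation of the (regular) AF mined from `D`, default `(dC, dO)` and
new case `N`: labelled cases attack each other as in `cbAtt`, and the new-case
argument attacks exactly the labelled cases `b` that are irrelevant to it,
i.e. with `¬ b.1 ≤ N`. -/
def minedAtt [PartialOrder X] (D : Set (X × Bool)) (dC : X) (dO : Bool) (N : X) :
    Option (X × Bool) → Option (X × Bool) → Prop
  | some a, some b => cbAtt (insert (dC, dO) D) a b
  | none, some b => b ∈ insert (dC, dO) D ∧ ¬ b.1 ≤ N
  | _, none => False

/-- The grounded extension of the AF mined from `D` and new case `N`. -/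
def minedGrounded [PartialOrder X] (D : Set (X × Bool)) (dC : X) (dO : Bool) (N : X) :
    Set (Option (X × Bool)) :=
  grounded (minedArgs D dC dO) (minedAtt D dC dO N)

open Classical in
/-- The AA-CBR_⪰ prediction for `N`: the default outcome `dO` if the default
argument is in the grounded extension, and the other outcome otherwise. -/
noncomputable def predict [PartialOrder X] (D : Set (X × Bool)) (dC : X) (dO : Bool)
    (N : X) : Bool :=
  if some (dC, dO) ∈ minedGrounded D dC dO N then dO else !dO

/-- A casebase is coherent if no characterisation occurs with two outcomes. -/
def coherent (D : Set (X × Bool)) : Prop :=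
  ∀ a ∈ D, ∀ b ∈ D, a.1 = b.1 → a.2 = b.2

/-- A case `a ∈ D` is nearest to `N` iff `a.1 ⪯ N`, maximally so. -/
def nearest [PartialOrder X] (D : Set (X × Bool)) (N : X) (a : X × Bool) : Prop :=
  a ∈ D ∧ a.1 ≤ N ∧ ¬ ∃ b ∈ D, a.1 < b.1 ∧ b.1 ≤ N

end AACBR

namespace AACBR

variable {X : Type} [PartialOrder X]

omit [PartialOrder X] in
lemma some_mem_minedArgs {D : Set (X × Bool)} {dC : X} {dO : Bool} {a : X × Bool} :
    some a ∈ minedArgs D dC dO ↔ a ∈ insert (dC, dO) D := by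
  simp [minedArgs]

lemma none_mem_seq (D : Set (X × Bool)) (dC : X) (dO : Bool) (N : X) :
    ∀ i, (none : Option (X × Bool)) ∈
      groundedSeq (minedArgs D dC dO) (minedAtt D dC dO N) i := by
  intro i
  cases i with
  | zero =>
    refine ⟨Set.mem_insert _ _, fun b _ hb => ?_⟩
    cases b <;> simp [minedAtt] at hb
  | succ n =>
    refine ⟨Set.mem_insert _ _, fun b _ hb => ?_⟩
    cases b <;> simp [minedAtt] at hb

lemma irrelevant_not_mem_seq {D : Set (X × Bool)} {dC : X} {dO : Bool} {N : X}
    {a : X × Bool} (ha : ¬ a.1 ≤ N) :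
    ∀ i, some a ∉ groundedSeq (minedArgs D dC dO) (minedAtt D dC dO N) i := by
  intro i
  cases i with
  | zero =>
    rintro ⟨hmem, hun⟩
    exact hun none (Set.mem_insert _ _) ⟨some_mem_minedArgs.mp hmem, ha⟩
  | succ n =>
    rintro ⟨hmem, hdef⟩
    obtain ⟨c, -, hc⟩ := hdef none (Set.mem_insert _ _) ⟨some_mem_minedArgs.mp hmem, ha⟩
    cases c <;> simp [minedAtt] at hc

lemma att_transfer {D₁ D₂ : Set (X × Bool)} {dC : X} {dO : Bool} {N : X}
    (heq : ∀ a : X × Bool, a.1 ≤ N → (a ∈ insert (dC, dO) D₁ ↔ a ∈ insert (dC, dO) D₂))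
    {a b : X × Bool} (ha : a.1 ≤ N) (hb : b.1 ≤ N)
    (h : cbAtt (insert (dC, dO) D₁) a b) : cbAtt (insert (dC, dO) D₂) a b := by
  obtain ⟨ha1, hb1, hne, hle, hmin⟩ := h
  refine ⟨(heq a ha).mp ha1, (heq b hb).mp hb1, hne, hle, ?_⟩
  rintro ⟨g, hg2, hgo, hbg, hga⟩
  exact hmin ⟨g, (heq g (le_trans hga.le ha)).mpr hg2, hgo, hbg, hga⟩

lemma seq_transfer {D₁ D₂ : Set (X × Bool)} {dC : X} {dO : Bool} {N : X}
    (heq : ∀ a : X × Bool, a.1 ≤ N → (a ∈ insert (dC, dO) D₁ ↔ a ∈ insert (dC, dO) D₂)) :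
    ∀ i (a : X × Bool), a.1 ≤ N →
      some a ∈ groundedSeq (minedArgs D₁ dC dO) (minedAtt D₁ dC dO N) i →
      some a ∈ groundedSeq (minedArgs D₂ dC dO) (minedAtt D₂ dC dO N) (i + 1) := by
  intro i
  induction i with
  | zero =>
    intro a ha hmem
    obtain ⟨hargs, hun⟩ := hmem
    have ha2 : a ∈ insert (dC, dO) D₂ := (heq a ha).mp (some_mem_minedArgs.mp hargs)
    refine ⟨some_mem_minedArgs.mpr ha2, fun b hbargs hatt => ?_⟩
    cases b with
    | none => exact absurd ha hatt.2
    | some c =>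
      by_cases hc : c.1 ≤ N
      · -- relevant attacker: transfer back to AF1, contradiction with unattacked
        have hatt1 : cbAtt (insert (dC, dO) D₁) c a :=
          att_transfer (fun x hx => (heq x hx).symm) hc ha hatt
        exact absurd hatt1 (hun (some c) (some_mem_minedArgs.mpr hatt1.1) )
      · exact ⟨none, none_mem_seq D₂ dC dO N 0, hatt.1, hc⟩
  | succ n ih =>
    intro a ha hmem
    obtain ⟨hargs, hdef⟩ := hmem
    have ha2 : a ∈ insert (dC, dO) D₂ := (heq a ha).mp (some_mem_minedArgs.mp hargs)
    refine ⟨some_mem_minedArgs.mpr ha2, fun b hbargs hatt => ?_⟩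
    cases b with
    | none => exact absurd ha hatt.2
    | some c =>
      by_cases hc : c.1 ≤ N
      · have hatt1 : cbAtt (insert (dC, dO) D₁) c a :=
          att_transfer (fun x hx => (heq x hx).symm) hc ha hatt
        obtain ⟨d, hdmem, hdatt⟩ :=
          hdef (some c) (some_mem_minedArgs.mpr hatt1.1) hatt1
        cases d with
        | none => exact absurd hc hdatt.2
        | some e =>
          have he : e.1 ≤ N := by
            by_contra hne
            exact irrelevant_not_mem_seq hne n hdmem
          exact ⟨some e, ih e he hdmem, att_transfer heq he hc hdatt⟩
      · exact ⟨none, none_mem_seq D₂ dC dO N (n + 1), hatt.1, hc⟩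

lemma grounded_transfer {D₁ D₂ : Set (X × Bool)} {dC : X} {dO : Bool} {N : X}
    (heq : ∀ a : X × Bool, a.1 ≤ N → (a ∈ insert (dC, dO) D₁ ↔ a ∈ insert (dC, dO) D₂))
    {a : X × Bool} (ha : a.1 ≤ N) (h : some a ∈ minedGrounded D₁ dC dO N) :
    some a ∈ minedGrounded D₂ dC dO N := by
  obtain ⟨_, ⟨i, rfl⟩, hi⟩ := h
  exact Set.mem_iUnion.mpr ⟨i + 1, seq_transfer heq i a ha hi⟩


/-- Coinciding predictions: if two casebases agree on their cases that are less
(or equally) specific than the new characterisation `N`, then the AA-CBR_⪰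
predictions for `N` coincide. -/
theorem coinciding_predictions {X : Type} [PartialOrder X]
    (D₁ D₂ : Set (X × Bool)) (hfin₁ : D₁.Finite) (hfin₂ : D₂.Finite)
    (dC : X) (dO : Bool) (hleast : ∀ x : X, dC ≤ x) (N : X)
    (heq : {a ∈ D₁ | a.1 ≤ N} = {a ∈ D₂ | a.1 ≤ N}) :
    predict D₁ dC dO N = predict D₂ dC dO N := by
  have heq' : ∀ a : X × Bool, a.1 ≤ N →
      (a ∈ insert (dC, dO) D₁ ↔ a ∈ insert (dC, dO) D₂) := by
    intro a ha
    have := Set.ext_iff.mp heq a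
    simp only [Set.mem_setOf_eq] at this
    constructor
    · rintro (rfl | h)
      · exact Set.mem_insert _ _
      · exact Set.mem_insert_of_mem _ (this.mp ⟨h, ha⟩).1
    · rintro (rfl | h)
      · exact Set.mem_insert _ _
      · exact Set.mem_insert_of_mem _ (this.mpr ⟨h, ha⟩).1
  have hd : (dC, dO).1 ≤ N := hleast N
  have key : some (dC, dO) ∈ minedGrounded D₁ dC dO N ↔
      some (dC, dO) ∈ minedGrounded D₂ dC dO N :=
    ⟨grounded_transfer heq' hd, grounded_transfer (fun x hx => (heq' x hx).symm) hd⟩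
  classical
  simp only [predict]
  by_cases h : some (dC, dO) ∈ minedGrounded D₁ dC dO N
  · rw [if_pos h, if_pos (key.mp h)]
  · rw [if_neg h, if_neg (fun h2 => h (key.mpr h2))]


end AACBR
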